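/- arXiv:0802.3964 — 6 statements merged into one kernel-verified Lean document; each statement's English description precedes it below -/
import Mathlib

section
/- Let n ≥ 1 and k ≥ 0 be integers, let m ∈ ℤ^{n+1} satisfy m_1 + … + m_{n+1} = 0, and assume m lies in wt B(kθ) but not in wt B((k−1)θ). Set m' = m + e_1 − e_{n+1}. Then: (i) m' lies in wt B((k+1)θ) but not in wt B(kθ) if and only if m_1 ≥ 0 and m_{n+1} ≤ 0; (ii) m' lies in wt B(kθ) but not in wt B((k−1)θ) if and only if either (m_1 ≥ 0 and m_{n+1} > 0) or (m_1 < 0 and m_{n+1} ≤ 0); (iii) m' lies in wt B((k−1)θ) but not in wt B((k−2)θ) if and only if m_1 < 0 and m_{n+1} > 0. -/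
/-- Type `Aₙ` weight membership: `m ∈ wt B(kθ)` (θ = e₁ − e_{n+1}); empty for `k < 0`. -/
def wtA (n : ℕ) (k : ℤ) (m : Fin (n + 1) → ℤ) : Prop :=
  0 ≤ k ∧ ∃ τ : Equiv.Perm (Fin (n + 1)),
    (∀ i j : Fin (n + 1), i ≤ j → m (τ j) ≤ m (τ i)) ∧
    (∀ i : ℕ, 1 ≤ i → i ≤ n →
      ∑ j ∈ Finset.univ.filter (fun j : Fin (n + 1) => (j : ℕ) < i), m (τ j) ≤ k)

lemma wtA_iff (n : ℕ) (k : ℤ) (m : Fin (n + 1) → ℤ) (hm : ∑ j, m j = 0) :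
    wtA n k m ↔ 0 ≤ k ∧ (∑ j, max (m j) 0) ≤ k := by
  constructor
  · rintro ⟨hk, τ, hA, hP⟩
    refine ⟨hk, ?_⟩
    set S := Finset.univ.filter (fun j : Fin (n + 1) => 0 < m (τ j)) with hSdef
    set p := S.card with hpdef
    have hiff : ∀ j : Fin (n + 1), 0 < m (τ j) ↔ (j : ℕ) < p := by
      intro j
      constructor
      · intro hj
        have hsub : Finset.Iic j ⊆ S := by
          intro i hi
          simp only [Finset.mem_Iic] at hi
          simp only [hSdef, Finset.mem_filter, Finset.mem_univ, true_and]
          exact lt_of_lt_of_le hj (hA i j hi)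
        have := Finset.card_le_card hsub
        rw [Fin.card_Iic] at this
        omega
      · intro hj
        by_contra hc
        have hsub : S ⊆ Finset.Iio j := by
          intro i hi
          simp only [hSdef, Finset.mem_filter, Finset.mem_univ, true_and] at hi
          simp only [Finset.mem_Iio]
          by_contra hij
          exact hc (lt_of_lt_of_le hi (hA j i (le_of_not_gt hij)))
        have := Finset.card_le_card hsub
        rw [Fin.card_Iio] at this
        omega
    have hsum : (∑ j, max (m j) 0) = ∑ j ∈ S, m (τ j) := by
      rw [← Equiv.sum_comp τ (fun j => max (m j) 0)]
      rw [← Finset.sum_filter_add_sum_filter_not Finset.univ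
        (fun j : Fin (n + 1) => 0 < m (τ j)) (fun j => max (m (τ j)) 0)]
      have h1 : ∑ j ∈ S, max (m (τ j)) 0 = ∑ j ∈ S, m (τ j) := by
        refine Finset.sum_congr rfl fun j hj => ?_
        simp only [hSdef, Finset.mem_filter] at hj
        exact max_eq_left hj.2.le
      have h2 : ∑ j ∈ Finset.univ.filter (fun j : Fin (n + 1) => ¬ 0 < m (τ j)),
          max (m (τ j)) 0 = 0 := by
        refine Finset.sum_eq_zero fun j hj => ?_
        simp only [Finset.mem_filter, not_lt] at hj
        exact max_eq_right hj.2
      rw [h1, h2, add_zero]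
    have hpn : p ≤ n := by
      by_contra hc
      have hle : p ≤ n + 1 := by
        have := Finset.card_le_univ S
        simpa using this
      have hp1 : p = n + 1 := by omega
      have hSuniv : S = Finset.univ := Finset.eq_univ_of_card S (by simpa using hp1)
      have hall : ∀ j : Fin (n + 1), 1 ≤ m (τ j) := by
        intro j
        have : j ∈ S := hSuniv ▸ Finset.mem_univ j
        simp only [hSdef, Finset.mem_filter] at this
        omega
      have h1 : (∑ j : Fin (n + 1), (1 : ℤ)) ≤ ∑ j, m (τ j) :=
        Finset.sum_le_sum fun j _ => hall j
      rw [Equiv.sum_comp τ m, hm] at h1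
      simp at h1
      omega
    rcases Nat.eq_zero_or_pos p with hp0 | hp0
    · have : S = ∅ := Finset.card_eq_zero.mp hp0
      rw [hsum, this, Finset.sum_empty]
      exact hk
    · have := hP p hp0 hpn
      have hfe : Finset.univ.filter (fun j : Fin (n + 1) => (j : ℕ) < p) = S := by
        ext j
        simp [hSdef, hiff j]
      rw [hfe] at this
      rw [hsum]
      exact this
  · rintro ⟨hk, hS⟩
    refine ⟨hk, Tuple.sort (fun i => -m i), ?_, ?_⟩
    · intro i j hij
      have := Tuple.monotone_sort (fun i => -m i) hij
      simp only [Function.comp] at this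
      omega
    · intro i _ _
      calc ∑ j ∈ Finset.univ.filter (fun j : Fin (n + 1) => (j : ℕ) < i),
            m (Tuple.sort (fun i => -m i) j)
          ≤ ∑ j ∈ Finset.univ.filter (fun j : Fin (n + 1) => (j : ℕ) < i),
            max (m (Tuple.sort (fun i => -m i) j)) 0 :=
            Finset.sum_le_sum fun j _ => le_max_left _ _
        _ ≤ ∑ j, max (m (Tuple.sort (fun i => -m i) j)) 0 :=
            Finset.sum_le_sum_of_subset_of_nonneg (Finset.subset_univ _)
              (fun j _ _ => le_max_right _ _)
        _ = ∑ j, max (m j) 0 := Equiv.sum_comp _ (fun j => max (m j) 0)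
        _ ≤ k := hS

theorem statement_3 (n : ℕ) (hn : 1 ≤ n) (k : ℤ) (hk : 0 ≤ k)
    (m : Fin (n + 1) → ℤ) (hm : ∑ j, m j = 0)
    (h : wtA n k m ∧ ¬ wtA n (k - 1) m)
    (m' : Fin (n + 1) → ℤ)
    (hm' : ∀ j, m' j = m j + (if j = 0 then 1 else 0) - (if j = Fin.last n then 1 else 0)) :
    ((wtA n (k + 1) m' ∧ ¬ wtA n k m') ↔ (0 ≤ m 0 ∧ m (Fin.last n) ≤ 0)) ∧
    ((wtA n k m' ∧ ¬ wtA n (k - 1) m') ↔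
      ((0 ≤ m 0 ∧ 0 < m (Fin.last n)) ∨ (m 0 < 0 ∧ m (Fin.last n) ≤ 0))) ∧
    ((wtA n (k - 1) m' ∧ ¬ wtA n (k - 2) m') ↔ (m 0 < 0 ∧ 0 < m (Fin.last n))) := by
  have hne : (0 : Fin (n + 1)) ≠ Fin.last n := by
    intro hc
    have := congrArg Fin.val hc
    simp [Fin.last] at this
    omega
  have hm'sum : ∑ j, m' j = 0 := by
    have : ∑ j, m' j = ∑ j, m j
        + ∑ j : Fin (n + 1), (if j = 0 then (1 : ℤ) else 0)
        - ∑ j : Fin (n + 1), (if j = Fin.last n then (1 : ℤ) else 0) := by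
      rw [← Finset.sum_add_distrib, ← Finset.sum_sub_distrib]
      exact Finset.sum_congr rfl fun j _ => hm' j
    simp [this, hm]
  set S := ∑ j, max (m j) 0 with hSdef
  set S' := ∑ j, max (m' j) 0 with hS'def
  have hS0 : 0 ≤ S := Finset.sum_nonneg fun j _ => le_max_right _ _
  have hS'0 : 0 ≤ S' := Finset.sum_nonneg fun j _ => le_max_right _ _
  rw [wtA_iff n k m hm, wtA_iff n (k - 1) m hm] at h
  have hSk : S = k := by
    obtain ⟨⟨-, h1⟩, h2⟩ := h
    rcases le_or_gt k 0 with hk0 | hk0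
    · omega
    · have : ¬ S ≤ k - 1 := fun hc => h2 ⟨by omega, hc⟩
      omega
  have hmLS : m (Fin.last n) ≤ S :=
    le_trans (le_max_left _ _)
      (Finset.single_le_sum (fun j _ => le_max_right (m j) 0) (Finset.mem_univ _))
  have hS' : S' = S + (if 0 ≤ m 0 then 1 else 0) - (if 0 < m (Fin.last n) then 1 else 0) := by
    have key : ∀ j, max (m' j) 0 = max (m j) 0
        + (if j = 0 then (if 0 ≤ m 0 then (1 : ℤ) else 0) else 0)
        - (if j = Fin.last n then (if 0 < m (Fin.last n) then (1 : ℤ) else 0) else 0) := by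
      intro j
      by_cases hj0 : j = 0 <;> by_cases hjL : j = Fin.last n
      · exact absurd (hj0 ▸ hjL) hne
      · subst hj0
        simp only [hm', if_pos rfl, if_neg hne, if_neg (Ne.symm hne)]
        split_ifs <;> omega
      · subst hjL
        simp only [hm', if_pos rfl, if_neg hj0]
        split_ifs <;> omega
      · simp only [hm', if_neg hj0, if_neg hjL]
        omega
    rw [hS'def]
    calc ∑ j, max (m' j) 0
        = ∑ j, (max (m j) 0
          + (if j = 0 then (if 0 ≤ m 0 then (1 : ℤ) else 0) else 0)
          - (if j = Fin.last n then (if 0 < m (Fin.last n) then (1 : ℤ) else 0) else 0)) :=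
          Finset.sum_congr rfl fun j _ => key j
      _ = S + (if 0 ≤ m 0 then 1 else 0) - (if 0 < m (Fin.last n) then 1 else 0) := by
          rw [Finset.sum_sub_distrib, Finset.sum_add_distrib]
          simp [hSdef, Finset.sum_ite_eq']
  refine ⟨?_, ?_, ?_⟩ <;>
    rw [wtA_iff n _ m' hm'sum, wtA_iff n _ m' hm'sum] <;>
    by_cases h0 : 0 ≤ m 0 <;>
    by_cases hL : 0 < m (Fin.last n) <;>
    simp only [h0, hL, if_true, if_false] at hS' <;>
    omega
end

section
/- Let n ≥ 2 and k ≥ 0 be integers, let m ∈ ℤ^n, and assume m lies in wt B(kθ) but not in wt B((k−1)θ). Set m' = m + 2e_1. Then: (i) m' lies in wt B((k+1)θ) but not in wt B(kθ) if and only if m_1 ≥ 0; (ii) m' lies in wt B(kθ) but not in wt B((k−1)θ) if and only if m_1 = −1; (iii) m' lies in wt B((k−1)θ) but not in wt B((k−2)θ) if and only if m_1 ≤ −2. -/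
/-- Type `Cₙ` weight membership: `m ∈ wt B(kθ)` (θ = 2e₁); empty for `k < 0`. -/
def wtC (n : ℕ) (k : ℤ) (m : Fin n → ℤ) : Prop :=
  0 ≤ k ∧ ∃ τ : Equiv.Perm (Fin n), ∃ ε : Fin n → ℤ,
    (∀ j, ε j = 1 ∨ ε j = -1) ∧
    (∀ i j : Fin n, i ≤ j → ε j * m (τ j) ≤ ε i * m (τ i)) ∧
    (∀ j, 0 ≤ ε j * m (τ j)) ∧
    (∀ i : ℕ, 1 ≤ i → i ≤ n - 1 →
      ∑ j ∈ Finset.univ.filter (fun j : Fin n => (j : ℕ) < i), ε j * m (τ j) ≤ 2 * k) ∧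
    (∃ t : ℤ, 0 ≤ t ∧ 2 * k - ∑ j, ε j * m (τ j) = 2 * t)

lemma wtC_iff (n : ℕ) (k : ℤ) (m : Fin n → ℤ) :
    wtC n k m ↔ 0 ≤ k ∧ (∑ j, |m j|) ≤ 2 * k ∧ ∃ r : ℤ, (∑ j, |m j|) = 2 * r := by
  constructor
  · rintro ⟨hk, τ, ε, hε, hmono, hnn, hpart, t, ht, hsum⟩
    have key : ∀ j, ε j * m (τ j) = |m (τ j)| := by
      intro j
      rcases hε j with h | h
      · rw [h, one_mul]
        have h2 := hnn j; rw [h, one_mul] at h2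
        exact (abs_of_nonneg h2).symm
      · rw [h, neg_one_mul]
        have h2 := hnn j; rw [h, neg_one_mul] at h2
        rw [abs_of_nonpos (by linarith)]
    have hsum2 : ∑ j, ε j * m (τ j) = ∑ j, |m j| := by
      rw [Finset.sum_congr rfl (fun j _ => key j)]
      exact Equiv.sum_comp τ (fun j => |m j|)
    rw [hsum2] at hsum
    exact ⟨hk, by omega, k - t, by omega⟩
  · rintro ⟨hk, hle, r, hr⟩
    set σ : Equiv.Perm (Fin n) := Tuple.sort (fun j => -|m j|) with hσ
    refine ⟨hk, σ, fun j => if 0 ≤ m (σ j) then 1 else -1, fun j => ?_, ?_, ?_, ?_, ?_⟩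
    · by_cases h : 0 ≤ m (σ j) <;> simp [h]
    all_goals
      have key : ∀ j, (if 0 ≤ m (σ j) then (1:ℤ) else -1) * m (σ j) = |m (σ j)| := by
        intro j
        by_cases h : 0 ≤ m (σ j)
        · rw [if_pos h, one_mul, abs_of_nonneg h]
        · rw [if_neg h, neg_one_mul, abs_of_nonpos (by linarith [lt_of_not_ge h])]
    · intro i j hij
      rw [key i, key j]
      have := Tuple.monotone_sort (fun j => -|m j|) hij
      simpa using this
    · intro j; rw [key j]; exact abs_nonneg _
    · intro i _ _
      calc ∑ j ∈ Finset.univ.filter (fun j : Fin n => (j : ℕ) < i),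
            (if 0 ≤ m (σ j) then (1:ℤ) else -1) * m (σ j)
          = ∑ j ∈ Finset.univ.filter (fun j : Fin n => (j : ℕ) < i), |m (σ j)| :=
            Finset.sum_congr rfl (fun j _ => key j)
        _ ≤ ∑ j, |m (σ j)| :=
            Finset.sum_le_sum_of_subset_of_nonneg (Finset.filter_subset _ _)
              (fun j _ _ => abs_nonneg _)
        _ = ∑ j, |m j| := Equiv.sum_comp σ (fun j => |m j|)
        _ ≤ 2 * k := hle
    · refine ⟨k - r, by omega, ?_⟩
      rw [Finset.sum_congr rfl (fun j _ => key j), Equiv.sum_comp σ (fun j => |m j|)]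
      omega

theorem statement_4 (n : ℕ) (hn : 2 ≤ n) (k : ℤ) (hk : 0 ≤ k)
    (m : Fin n → ℤ)
    (h : wtC n k m ∧ ¬ wtC n (k - 1) m)
    (m' : Fin n → ℤ)
    (hm' : ∀ j, m' j = m j + (if (j : ℕ) = 0 then 2 else 0)) :
    ((wtC n (k + 1) m' ∧ ¬ wtC n k m') ↔ 0 ≤ m ⟨0, by omega⟩) ∧
    ((wtC n k m' ∧ ¬ wtC n (k - 1) m') ↔ m ⟨0, by omega⟩ = -1) ∧
    ((wtC n (k - 1) m' ∧ ¬ wtC n (k - 2) m') ↔ m ⟨0, by omega⟩ ≤ -2) := by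
  obtain ⟨hw, hnw⟩ := h
  rw [wtC_iff] at hw hnw
  have h0n : 0 < n := by omega
  set i0 : Fin n := ⟨0, h0n⟩ with hi0
  set a := m i0 with ha
  set S := ∑ j, |m j| with hS
  set S' := ∑ j, |m' j| with hS'
  have hSnn : 0 ≤ S := Finset.sum_nonneg (fun j _ => abs_nonneg _)
  have haS : |a| ≤ S := Finset.single_le_sum (fun j _ => abs_nonneg (m j)) (Finset.mem_univ i0)
  obtain ⟨hk0, hle, r, hr⟩ := hw
  have hS2k : S = 2 * k := by
    by_contra hne
    exact hnw ⟨by omega, by omega, r, hr⟩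
  have hsplit : S' = S + (|a + 2| - |a|) := by
    have h1 : ∀ j : Fin n, |m' j| = |m j| + (if j = i0 then |a + 2| - |a| else 0) := by
      intro j
      by_cases hj : j = i0
      · subst hj; rw [hm']; simp [hi0, ← ha]; rw [ha, hi0]; ring
      · have hj0 : (j : ℕ) ≠ 0 := fun hc => hj (Fin.ext hc)
        rw [hm']; simp [hj0, hj]
    rw [hS', hS]
    simp_rw [h1]
    rw [Finset.sum_add_distrib, Finset.sum_ite_eq' Finset.univ i0]
    simp
  simp only [wtC_iff, ← hS']
  have hcase : (0 ≤ a ∧ S' = 2*k+2) ∨ (a = -1 ∧ S' = 2*k) ∨ (a ≤ -2 ∧ S' = 2*k-2 ∧ 1 ≤ k) := by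
    rcases le_or_gt 0 a with h0 | h0
    · left
      constructor; exact h0
      rw [hsplit, hS2k, abs_of_nonneg h0, abs_of_nonneg (by omega)]; ring
    · rcases eq_or_lt_of_le (show a ≤ -1 by omega) with h1 | h1
      · right; left
        refine ⟨h1, ?_⟩
        rw [hsplit, hS2k, h1]; norm_num
      · right; right
        have h2 : a ≤ -2 := by omega
        have hab : |a| = -a := abs_of_nonpos (by omega)
        refine ⟨h2, ?_, ?_⟩
        · rw [hsplit, hS2k, hab, abs_of_nonpos (by omega)]; ring
        · rw [hab] at haS; omega
  rcases hcase with ⟨h0, hv⟩ | ⟨h0, hv⟩ | ⟨h0, hv, hk1⟩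
  · have hEx : ∃ r : ℤ, S' = 2 * r := ⟨k + 1, by omega⟩
    simp only [hEx, and_true]
    omega
  · have hEx : ∃ r : ℤ, S' = 2 * r := ⟨k, by omega⟩
    simp only [hEx, and_true]
    omega
  · have hEx : ∃ r : ℤ, S' = 2 * r := ⟨k - 1, by omega⟩
    simp only [hEx, and_true]
    omega
end

section
/- With the combinatorial model of B_s = B^{1,s} ⊗ B^{n,s} of type A_n^{(1)} and the maps Θ_j as in the context, the map Θ_1 : B_{l−1} → B_l satisfies: (i) for every 0 ≤ k ≤ l−1, Θ_1 maps B(kθ) ⊂ B_{l−1} into B(kθ) ⊂ B_l; (ii) for every i ∈ {1,…,n}, Θ_1(f̃_i b) = f̃_i(Θ_1 b) for all b ∈ B_{l−1} (with the convention Θ_1(0) = 0); (iii) if b ∈ B_{l−1} and f̃_0 b ≠ 0, then Θ_1(f̃_0 b) = f̃_0(Θ_1 b); (iv) if b ∈ B_{l−1} and f̃_0 b = 0, then f̃_0(Θ_1 b) ≠ 0, f̃_0(f̃_0(Θ_1 b)) = 0, and f̃_0(Θ_1 b) lies in B(lθ) ⊂ B_l. -/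
/-- Model of `B^{1,s} ⊗ B^{n,s}` of type `A_n^{(1)}`: a pair `(x, y)` of tuples of
nonnegative integers indexed by the letters `1, …, n+1` (here `Fin (n+1)`). -/
abbrev ACrystal (n : ℕ) := (Fin (n + 1) → ℕ) × (Fin (n + 1) → ℕ)

/-- Membership in `B_s`: both coordinate sums are `s`. -/
def inB (n s : ℕ) (b : ACrystal n) : Prop :=
  (∑ j, b.1 j = s) ∧ (∑ j, b.2 j = s)

/-- Membership in the component `B(kθ) ⊂ B_s`: `min(x₁, y₁) = s − k`. -/
def inComp (n s : ℕ) (k : ℤ) (b : ACrystal n) : Prop :=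
  inB n s b ∧ (min (b.1 0) (b.2 0) : ℤ) = (s : ℤ) - k

/-- The weight `wt b = (x₁ − y₁, …, x_{n+1} − y_{n+1})`. -/
def wtOf (n : ℕ) (b : ACrystal n) : Fin (n + 1) → ℤ :=
  fun j => (b.1 j : ℤ) - (b.2 j : ℤ)

/-- `f̃_i` on `B^{1,s}` for `i ∈ {1, …, n}` (here `i = p + 1` for `p : Fin n`):
`x ↦ x − e_i + e_{i+1}` if `x_i > 0`, and `0` (i.e. `none`) otherwise. -/
def fX (n : ℕ) (p : Fin n) (x : Fin (n + 1) → ℕ) : Option (Fin (n + 1) → ℕ) :=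
  if 0 < x p.castSucc then
    some (fun j => x j - (if j = p.castSucc then 1 else 0) + (if j = p.succ then 1 else 0))
  else none

/-- `f̃_i` on `B^{n,s}` for `i ∈ {1, …, n}`: `y ↦ y + e_i − e_{i+1}` if `y_{i+1} > 0`. -/
def fY (n : ℕ) (p : Fin n) (y : Fin (n + 1) → ℕ) : Option (Fin (n + 1) → ℕ) :=
  if 0 < y p.succ then
    some (fun j => y j + (if j = p.castSucc then 1 else 0) - (if j = p.succ then 1 else 0))
  else none

/-- `f̃_0` on `B^{1,s}`: `x ↦ x + e_1 − e_{n+1}` if `x_{n+1} > 0`. -/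
def fX0 (n : ℕ) (x : Fin (n + 1) → ℕ) : Option (Fin (n + 1) → ℕ) :=
  if 0 < x (Fin.last n) then
    some (fun j => x j + (if j = 0 then 1 else 0) - (if j = Fin.last n then 1 else 0))
  else none

/-- `f̃_0` on `B^{n,s}`: `y ↦ y − e_1 + e_{n+1}` if `y_1 > 0`. -/
def fY0 (n : ℕ) (y : Fin (n + 1) → ℕ) : Option (Fin (n + 1) → ℕ) :=
  if 0 < y 0 then
    some (fun j => y j - (if j = 0 then 1 else 0) + (if j = Fin.last n then 1 else 0))
  else none

/-- Tensor product rule for `f̃_i`, `i ∈ {1, …, n}`: act on the first factor if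
`φ_i(x) > ε_i(y)` (i.e. `x_i > y_i`), on the second otherwise. -/
def fB (n : ℕ) (p : Fin n) (b : ACrystal n) : Option (ACrystal n) :=
  if b.2 p.castSucc < b.1 p.castSucc then (fX n p b.1).map (fun x => (x, b.2))
  else (fY n p b.2).map (fun y => (b.1, y))

/-- Tensor product rule for `f̃_0`: act on the first factor if `φ_0(x) > ε_0(y)`
(i.e. `x_{n+1} > y_{n+1}`), on the second otherwise. -/
def fB0 (n : ℕ) (b : ACrystal n) : Option (ACrystal n) :=
  if b.2 (Fin.last n) < b.1 (Fin.last n) then (fX0 n b.1).map (fun x => (x, b.2))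
  else (fY0 n b.2).map (fun y => (b.1, y))

/-- `Θ_j : B_{l−1} → B_l`, `(x, y) ↦ (x + e_j, y + e_j)` (here the letter `j+1`
for `j : Fin (n+1)`; `Θ_1` is `Theta n 0`). -/
def Theta (n : ℕ) (j : Fin (n + 1)) (b : ACrystal n) : ACrystal n :=
  (fun i => b.1 i + (if i = j then 1 else 0), fun i => b.2 i + (if i = j then 1 else 0))

theorem statement_6 (n l : ℕ) (hn : 1 ≤ n) (hl : 1 ≤ l) :
    -- (i) `Θ_1` maps `B(kθ) ⊂ B_{l−1}` into `B(kθ) ⊂ B_l` for `0 ≤ k ≤ l−1`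
    (∀ k : ℕ, k ≤ l - 1 → ∀ b : ACrystal n,
      inComp n (l - 1) k b → inComp n l k (Theta n 0 b)) ∧
    -- (ii) `Θ_1` commutes with `f̃_i` for `i ∈ {1, …, n}` (with `Θ_1(0) = 0`)
    (∀ p : Fin n, ∀ b : ACrystal n, inB n (l - 1) b →
      Option.map (Theta n 0) (fB n p b) = fB n p (Theta n 0 b)) ∧
    -- (iii) if `f̃_0 b ≠ 0` then `Θ_1(f̃_0 b) = f̃_0(Θ_1 b)`
    (∀ b : ACrystal n, inB n (l - 1) b → fB0 n b ≠ none →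
      Option.map (Theta n 0) (fB0 n b) = fB0 n (Theta n 0 b)) ∧
    -- (iv) if `f̃_0 b = 0` then `f̃_0(Θ_1 b) ≠ 0`, `f̃_0²(Θ_1 b) = 0`, and
    --      `f̃_0(Θ_1 b) ∈ B(lθ) ⊂ B_l`
    (∀ b : ACrystal n, inB n (l - 1) b → fB0 n b = none →
      ∃ b' : ACrystal n, fB0 n (Theta n 0 b) = some b' ∧ fB0 n b' = none ∧
        inComp n l l b') := by

  have hlast0 : (Fin.last n) ≠ (0 : Fin (n+1)) := by
    simp [Fin.ext_iff]; omega
  have hsum : ∀ x : Fin (n+1) → ℕ, (∑ j, x j = l - 1) →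
      ∑ j, (x j + (if j = (0:Fin (n+1)) then 1 else 0)) = l := by
    intro x hx
    rw [Finset.sum_add_distrib, hx]
    simp [Finset.sum_ite_eq']
    omega
  refine ⟨?_, ?_, ?_, ?_⟩
  · -- (i)
    intro k hk b hb
    obtain ⟨⟨h1, h2⟩, h3⟩ := hb
    refine ⟨⟨hsum _ h1, hsum _ h2⟩, ?_⟩
    simp only [Theta, if_pos rfl]
    push_cast
    push_cast at h3
    omega
  · -- (ii)
    intro p b _
    have hcs : p.castSucc ≠ p.succ := (Fin.castSucc_lt_succ : p.castSucc < p.succ).ne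
    have hs0 : p.succ ≠ (0 : Fin (n+1)) := Fin.succ_ne_zero p
    simp only [fB, Theta]
    by_cases hguard : b.2 p.castSucc < b.1 p.castSucc
    · have hguard' : b.2 p.castSucc + (if p.castSucc = (0:Fin (n+1)) then 1 else 0)
          < b.1 p.castSucc + (if p.castSucc = (0:Fin (n+1)) then 1 else 0) := by omega
      rw [if_pos hguard]; erw [if_pos hguard']
      simp only [fX]
      have hx : 0 < b.1 p.castSucc := by omega
      rw [if_pos hx, if_pos (by omega : 0 < b.1 p.castSucc + (if p.castSucc = (0:Fin (n+1)) then 1 else 0))]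
      simp only [Option.map_some]
      refine congrArg some (Prod.ext ?_ rfl)
      funext j
      rcases eq_or_ne j p.castSucc with h1 | h1 <;>
        rcases eq_or_ne j p.succ with h2 | h2 <;>
        rcases eq_or_ne j (0 : Fin (n+1)) with h3 | h3 <;>
        simp_all [Theta] <;> omega
    · have hguard' : ¬ (b.2 p.castSucc + (if p.castSucc = (0:Fin (n+1)) then 1 else 0)
          < b.1 p.castSucc + (if p.castSucc = (0:Fin (n+1)) then 1 else 0)) := by omega
      rw [if_neg hguard]; erw [if_neg hguard']
      simp only [fY]
      by_cases hy : 0 < b.2 p.succ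
      · rw [if_pos hy, if_pos (show 0 < b.2 p.succ + (if p.succ = (0:Fin (n+1)) then 1 else 0) by omega)]
        simp only [Option.map_some]
        refine congrArg some (Prod.ext rfl ?_)
        funext j
        have hcs : p.castSucc ≠ p.succ := (Fin.castSucc_lt_succ : p.castSucc < p.succ).ne
        rcases eq_or_ne j p.castSucc with h1 | h1 <;>
          rcases eq_or_ne j p.succ with h2 | h2 <;>
          rcases eq_or_ne j (0 : Fin (n+1)) with h3 | h3 <;>
          simp_all [Theta] <;> omega
      · rw [if_neg hy, if_neg (show ¬ 0 < b.2 p.succ + (if p.succ = (0:Fin (n+1)) then 1 else 0) by simp [hs0]; omega)]; rfl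
  · -- (iii)
    intro b _ hne
    simp only [fB0, Theta]
    by_cases hguard : b.2 (Fin.last n) < b.1 (Fin.last n)
    · have hguard' : b.2 (Fin.last n) + (if Fin.last n = (0:Fin (n+1)) then 1 else 0)
          < b.1 (Fin.last n) + (if Fin.last n = (0:Fin (n+1)) then 1 else 0) := by omega
      rw [if_pos hguard]; erw [if_pos hguard']
      simp only [fX0, if_neg hlast0]
      have hx : 0 < b.1 (Fin.last n) := by omega
      rw [if_pos hx, if_pos (by omega : 0 < b.1 (Fin.last n) + (0:ℕ))]
      simp only [Option.map_some]
      refine congrArg some (Prod.ext ?_ rfl)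
      funext j
      rcases eq_or_ne j (Fin.last n) with h1 | h1 <;>
        rcases eq_or_ne j (0 : Fin (n+1)) with h3 | h3 <;>
        simp_all [Theta] <;> omega
    · have hguard' : ¬ (b.2 (Fin.last n) + (if Fin.last n = (0:Fin (n+1)) then 1 else 0)
          < b.1 (Fin.last n) + (if Fin.last n = (0:Fin (n+1)) then 1 else 0)) := by omega
      rw [if_neg hguard]; erw [if_neg hguard']
      simp only [fB0, fY0, if_neg hguard] at hne
      have hy : 0 < b.2 0 := by
        by_contra h
        exact hne (by simp [fY0, Nat.not_lt.mp h, Nat.le_zero.mp (Nat.not_lt.mp h)])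
      simp only [fY0]
      rw [if_pos hy, if_pos (by simpa using Nat.lt_succ_of_lt hy)]
      simp only [Option.map_some]
      refine congrArg some (Prod.ext rfl ?_)
      funext j
      rcases eq_or_ne j (Fin.last n) with h1 | h1 <;>
        rcases eq_or_ne j (0 : Fin (n+1)) with h3 | h3 <;>
        simp_all [Theta] <;> omega
  · -- (iv)
    intro b hb hnone
    obtain ⟨h1, h2⟩ := hb
    have hguard : ¬ (b.2 (Fin.last n) < b.1 (Fin.last n)) := by
      intro h
      simp only [fB0, if_pos h, fX0, if_pos (by omega : 0 < b.1 (Fin.last n)),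
        Option.map_some] at hnone
      exact Option.some_ne_none _ hnone
    have hy0 : b.2 0 = 0 := by
      by_contra h
      simp only [fB0, if_neg hguard, fY0, if_pos (Nat.pos_of_ne_zero h),
        Option.map_some] at hnone
      exact Option.some_ne_none _ hnone
    have hsum' : ∀ (i0 : Fin (n+1)) (x : Fin (n+1) → ℕ), (∑ j, x j = l - 1) →
        ∑ j, (x j + (if j = i0 then 1 else 0)) = l := by
      intro i0 x hx
      rw [Finset.sum_add_distrib, hx]
      simp [Finset.sum_ite_eq']
      omega
    have h0last : (0 : Fin (n+1)) ≠ Fin.last n := Ne.symm hlast0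
    refine ⟨(fun i => b.1 i + (if i = (0:Fin (n+1)) then 1 else 0),
        fun i => b.2 i + (if i = Fin.last n then 1 else 0)), ?_, ?_, ?_, ?_⟩
    · simp only [fB0, fY0, Theta, if_neg hlast0, eq_self_iff_true, if_true, Nat.add_zero]
      rw [if_neg hguard, if_pos (by omega : 0 < b.2 0 + 1)]
      simp only [Option.map_some]
      refine congrArg some (Prod.ext rfl ?_)
      funext j
      rcases eq_or_ne j (Fin.last n) with hj | hj <;>
        rcases eq_or_ne j (0 : Fin (n+1)) with hj0 | hj0 <;>
        simp_all <;> omega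
    · simp only [fB0, fY0, if_neg hlast0, eq_self_iff_true, if_true, if_neg h0last, Nat.add_zero]
      rw [if_neg (by omega : ¬ b.2 (Fin.last n) + 1 < b.1 (Fin.last n)),
        if_neg (by omega : ¬ 0 < b.2 0)]
      rfl
    · exact ⟨hsum' 0 _ h1, hsum' (Fin.last n) _ h2⟩
    · simp only [eq_self_iff_true, if_true, if_neg h0last, hy0, Nat.add_zero]
      push_cast
      omega
end

section
/- With the combinatorial model of B_s = B^{1,s} ⊗ B^{n,s} of type A_n^{(1)} and the maps Θ_j as in the context, for every j ∈ {2,…,n+1}: (i) for every 0 ≤ k ≤ l−1, Θ_j maps B(kθ) ⊂ B_{l−1} into B((k+1)θ) ⊂ B_l; (ii) for every i ∈ {1,…,n} and every b ∈ B_{l−1} with f̃_i b ≠ 0, Θ_j(f̃_i b) = f̃_i(Θ_j b); (iii) Θ_j(f̃_0 b) = f̃_0(Θ_j b) for all b ∈ B_{l−1} (with the convention Θ_j(0) = 0; in particular f̃_0 b = 0 implies f̃_0(Θ_j b) = 0). -/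
theorem statement_7 (n l : ℕ) (hn : 1 ≤ n) (hl : 1 ≤ l)
    (j : Fin (n + 1)) (hj : j ≠ 0) :
    -- (i) `Θ_j` maps `B(kθ) ⊂ B_{l−1}` into `B((k+1)θ) ⊂ B_l` for `0 ≤ k ≤ l−1`
    (∀ k : ℕ, k ≤ l - 1 → ∀ b : ACrystal n,
      inComp n (l - 1) k b → inComp n l (k + 1) (Theta n j b)) ∧
    -- (ii) `Θ_j(f̃_i b) = f̃_i(Θ_j b)` whenever `i ∈ {1, …, n}` and `f̃_i b ≠ 0`
    (∀ p : Fin n, ∀ b : ACrystal n, inB n (l - 1) b → fB n p b ≠ none →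
      Option.map (Theta n j) (fB n p b) = fB n p (Theta n j b)) ∧
    -- (iii) `Θ_j` commutes with `f̃_0` (with `Θ_j(0) = 0`)
    (∀ b : ACrystal n, inB n (l - 1) b →
      Option.map (Theta n j) (fB0 n b) = fB0 n (Theta n j b)) := by

  constructor
  · rintro k hk b ⟨⟨hx, hy⟩, hmin⟩
    have hsum : ∀ f : Fin (n + 1) → ℕ, (∑ i, f i = l - 1) →
        ∑ i, (f i + (if i = j then 1 else 0)) = l := by
      intro f hf
      rw [Finset.sum_add_distrib, hf, Finset.sum_ite_eq' Finset.univ j (fun _ => 1)]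
      simp
      omega
    refine ⟨⟨hsum _ hx, hsum _ hy⟩, ?_⟩
    have h0 : (0 : Fin (n + 1)) ≠ j := fun h => hj h.symm
    simp only [Theta, if_neg h0, add_zero]
    omega
  constructor
  · intro p b _ hne
    have hcs : p.castSucc ≠ p.succ := by
      simp [Fin.ext_iff]
    by_cases hc : b.2 p.castSucc < b.1 p.castSucc
    · have h1 : 0 < b.1 p.castSucc := by omega
      have hc' : (Theta n j b).2 p.castSucc < (Theta n j b).1 p.castSucc := by
        simp only [Theta]; omega
      have h1' : 0 < (Theta n j b).1 p.castSucc := by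
        simp only [Theta]; omega
      simp only [fB, if_pos hc, if_pos hc', fX, if_pos h1, if_pos h1', Option.map_some]
      refine congrArg some (Prod.ext ?_ rfl)
      funext i
      simp only [Theta]
      split_ifs <;> subst_vars <;> simp_all <;> omega
    · have hc' : ¬ (Theta n j b).2 p.castSucc < (Theta n j b).1 p.castSucc := by
        simp only [Theta]; omega
      by_cases h2 : 0 < b.2 p.succ
      · have h2' : 0 < (Theta n j b).2 p.succ := by
          simp only [Theta]; omega
        simp only [fB, if_neg hc, if_neg hc', fY, if_pos h2, if_pos h2', Option.map_some]
        refine congrArg some (Prod.ext rfl ?_)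
        funext i
        simp only [Theta]
        split_ifs <;> subst_vars <;> simp_all <;> omega
      · exfalso
        apply hne
        simp [fB, if_neg hc, fY, if_neg h2]
  · intro b _
    by_cases hc : b.2 (Fin.last n) < b.1 (Fin.last n)
    · have h1 : 0 < b.1 (Fin.last n) := by omega
      have hc' : (Theta n j b).2 (Fin.last n) < (Theta n j b).1 (Fin.last n) := by
        simp only [Theta]; omega
      have h1' : 0 < (Theta n j b).1 (Fin.last n) := by
        simp only [Theta]; omega
      have h0l : (0 : Fin (n + 1)) ≠ Fin.last n := by
        simp [Fin.ext_iff]; omega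
      simp only [fB0, if_pos hc, if_pos hc', fX0, if_pos h1, if_pos h1', Option.map_some]
      refine congrArg some (Prod.ext ?_ rfl)
      funext i
      simp only [Theta]
      split_ifs <;> subst_vars <;> simp_all <;> omega
    · have hc' : ¬ (Theta n j b).2 (Fin.last n) < (Theta n j b).1 (Fin.last n) := by
        simp only [Theta]; omega
      have h0j : (0 : Fin (n + 1)) ≠ j := fun h => hj h.symm
      by_cases h2 : 0 < b.2 0
      · have h2' : 0 < (Theta n j b).2 0 := by
          simp only [Theta, if_neg h0j]; omega
        simp only [fB0, if_neg hc, if_neg hc', fY0, if_pos h2, if_pos h2', Option.map_some]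
        refine congrArg some (Prod.ext rfl ?_)
        funext i
        simp only [Theta]
        split_ifs <;> subst_vars <;> simp_all <;> omega
      · have h2' : ¬ 0 < (Theta n j b).2 0 := by
          simp only [Theta, if_neg h0j]; omega
        simp [fB0, if_neg hc, if_neg hc', fY0, if_neg h2, if_neg h2']
end

section
/- With the combinatorial model of B_s = B^{1,s} ⊗ B^{n,s} of type A_n^{(1)}, the maps Θ_j, and the weight sets wt B(kθ) as in the context, for every 1 ≤ k ≤ l one has ⋃_{j=2}^{n+1} Θ_j(B((k−1)θ) ⊂ B_{l−1}) = { b ∈ B(kθ) ⊂ B_l : wt b ∈ wt B((k−1)θ) }. -/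
section Helpers

lemma filter_lt_eq_map {N i : ℕ} (h : i ≤ N) :
    Finset.univ.filter (fun a : Fin N => (a : ℕ) < i)
      = (Finset.univ : Finset (Fin i)).map (Fin.castLEEmb h) := by
  ext a
  simp only [Finset.mem_filter, Finset.mem_univ, true_and, Finset.mem_map]
  constructor
  · intro ha
    exact ⟨⟨a, ha⟩, rfl⟩
  · rintro ⟨b, rfl⟩
    exact b.2

lemma card_filter_lt {N i : ℕ} (h : i ≤ N) :
    (Finset.univ.filter (fun a : Fin N => (a : ℕ) < i)).card = i := by
  rw [filter_lt_eq_map h, Finset.card_map, Finset.card_univ, Fintype.card_fin]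

lemma sum_le_top_aux {N i : ℕ} (g : Fin N → ℤ)
    (hg : ∀ a b : Fin N, a ≤ b → g b ≤ g a) (hiN : i ≤ N) :
    ∀ d : ℕ, ∀ A : Finset (Fin N), A.card = i →
      (A \ Finset.univ.filter (fun a : Fin N => (a : ℕ) < i)).card = d →
      ∑ a ∈ A, g a ≤ ∑ a ∈ Finset.univ.filter (fun a : Fin N => (a : ℕ) < i), g a := by
  have hTcard : (Finset.univ.filter (fun a : Fin N => (a : ℕ) < i)).card = i :=
    card_filter_lt hiN
  set T := Finset.univ.filter (fun a : Fin N => (a : ℕ) < i) with hT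
  intro d
  induction d with
  | zero =>
    intro A hA hd
    have hsub : A ⊆ T := Finset.sdiff_eq_empty_iff_subset.mp (Finset.card_eq_zero.mp hd)
    have : A = T := Finset.eq_of_subset_of_card_le hsub (by omega)
    rw [this]
  | succ d ih =>
    intro A hA hd
    have hAT : (A \ T).Nonempty := Finset.card_pos.mp (by omega)
    obtain ⟨a, ha⟩ := hAT
    have haA : a ∈ A := (Finset.mem_sdiff.mp ha).1
    have haT : a ∉ T := (Finset.mem_sdiff.mp ha).2
    have hTA : (T \ A).Nonempty := by
      apply Finset.card_pos.mp
      rw [Finset.card_sdiff_comm (by omega)]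
      omega
    obtain ⟨b, hb⟩ := hTA
    have hbT : b ∈ T := (Finset.mem_sdiff.mp hb).1
    have hbA : b ∉ A := (Finset.mem_sdiff.mp hb).2
    have hba : b ≤ a := by
      have h1 : (b : ℕ) < i := (Finset.mem_filter.mp hbT).2
      have h2 : ¬ (a : ℕ) < i := fun hc => haT (Finset.mem_filter.mpr ⟨Finset.mem_univ _, hc⟩)
      exact Fin.le_def.mpr (by omega)
    have hbe : b ∉ A.erase a := fun hc => hbA (Finset.mem_of_mem_erase hc)
    have hA' : (insert b (A.erase a)).card = i := by
      rw [Finset.card_insert_of_notMem hbe, Finset.card_erase_of_mem haA, hA]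
      have : 1 ≤ i := by
        have := Finset.card_pos.mpr ⟨a, haA⟩; omega
      omega
    have hd' : (insert b (A.erase a) \ T).card = d := by
      have heq : insert b (A.erase a) \ T = (A \ T).erase a := by
        ext c
        simp only [Finset.mem_sdiff, Finset.mem_insert, Finset.mem_erase]
        constructor
        · rintro ⟨hc1 | ⟨hca, hcA⟩, hcT⟩
          · exact absurd (hc1 ▸ hbT) hcT
          · exact ⟨hca, hcA, hcT⟩
        · rintro ⟨hca, hcA, hcT⟩
          exact ⟨Or.inr ⟨hca, hcA⟩, hcT⟩
      rw [heq, Finset.card_erase_of_mem ha, hd]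
      omega
    calc ∑ x ∈ A, g x = g a + ∑ x ∈ A.erase a, g x := (Finset.add_sum_erase _ _ haA).symm
      _ ≤ g b + ∑ x ∈ A.erase a, g x := by
          have := hg b a hba; omega
      _ = ∑ x ∈ insert b (A.erase a), g x := (Finset.sum_insert hbe).symm
      _ ≤ ∑ a ∈ T, g a := ih _ hA' hd'

lemma sum_le_sum_top {N : ℕ} (g : Fin N → ℤ)
    (hg : ∀ a b : Fin N, a ≤ b → g b ≤ g a) (A : Finset (Fin N)) :
    ∑ a ∈ A, g a ≤ ∑ a ∈ Finset.univ.filter (fun a : Fin N => (a : ℕ) < A.card), g a := by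
  have hiN : A.card ≤ N := by
    have := A.card_le_univ
    simpa using this
  exact sum_le_top_aux g hg hiN _ A rfl rfl

lemma wtA_sum_subset {n : ℕ} {k' : ℤ} {m : Fin (n + 1) → ℤ} (h : wtA n k' m)
    (S : Finset (Fin (n + 1))) (hS1 : S.Nonempty) (hS2 : S ≠ Finset.univ) :
    ∑ j ∈ S, m j ≤ k' := by
  obtain ⟨hk, τ, hmono, hsum⟩ := h
  have h1 : 1 ≤ S.card := hS1.card_pos
  have h2 : S.card ≤ n := by
    have hlt := Finset.card_lt_card (Finset.ssubset_univ_iff.mpr hS2)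
    simp only [Finset.card_univ, Fintype.card_fin] at hlt
    omega
  have hinj : ∀ x ∈ S, ∀ y ∈ S, τ.symm x = τ.symm y → x = y :=
    fun x _ y _ hxy => τ.symm.injective hxy
  have hcard : (S.image τ.symm).card = S.card :=
    Finset.card_image_of_injective _ τ.symm.injective
  have key : ∑ a ∈ S.image τ.symm, m (τ a) = ∑ j ∈ S, m j := by
    rw [Finset.sum_image hinj]
    simp
  calc ∑ j ∈ S, m j = ∑ a ∈ S.image τ.symm, m (τ a) := key.symm
    _ ≤ ∑ a ∈ Finset.univ.filter
          (fun a : Fin (n + 1) => (a : ℕ) < (S.image τ.symm).card), m (τ a) :=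
        sum_le_sum_top (fun a => m (τ a)) hmono _
    _ ≤ k' := by rw [hcard]; exact hsum S.card h1 h2

lemma wtA_of_all_subsets {n : ℕ} {k' : ℤ} (hk : 0 ≤ k') {m : Fin (n + 1) → ℤ}
    (h : ∀ S : Finset (Fin (n + 1)), ∑ j ∈ S, m j ≤ k') : wtA n k' m := by
  refine ⟨hk, Tuple.sort (fun j => -(m j)), fun i j hij => ?_, fun i _ _ => ?_⟩
  · have := Tuple.monotone_sort (fun j => -(m j)) hij
    simp only [Function.comp] at this
    omega
  · set τ := Tuple.sort (fun j => -(m j))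
    have heq : ∑ j ∈ Finset.univ.filter (fun j : Fin (n + 1) => (j : ℕ) < i), m (τ j)
        = ∑ a ∈ (Finset.univ.filter (fun j : Fin (n + 1) => (j : ℕ) < i)).image τ, m a := by
      rw [Finset.sum_image (fun x _ y _ hxy => τ.injective hxy)]
    rw [heq]
    exact h _

lemma sum_diff_le {n : ℕ} (x y : Fin (n + 1) → ℕ) (s : ℕ) (k' : ℤ)
    (hx : ∑ j, x j = s) (hy : ∑ j, y j = s)
    (hminx : (s : ℤ) - k' ≤ (x 0 : ℤ)) (hminy : (s : ℤ) - k' ≤ (y 0 : ℤ))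
    (S : Finset (Fin (n + 1))) :
    ∑ j ∈ S, ((x j : ℤ) - (y j : ℤ)) ≤ k' := by
  rw [Finset.sum_sub_distrib]
  have hxZ : ∑ j, (x j : ℤ) = s := by rw [← Nat.cast_sum, hx]
  have hyZ : ∑ j, (y j : ℤ) = s := by rw [← Nat.cast_sum, hy]
  by_cases h0 : (0 : Fin (n + 1)) ∈ S
  · have h1 : ∑ j ∈ S, (x j : ℤ) ≤ s := by
      rw [← hxZ]
      exact Finset.sum_le_sum_of_subset_of_nonneg (Finset.subset_univ S)
        (fun i _ _ => Int.natCast_nonneg _)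
    have h2 : (y 0 : ℤ) ≤ ∑ j ∈ S, (y j : ℤ) :=
      Finset.single_le_sum (fun i _ => Int.natCast_nonneg _) h0
    linarith
  · have hins := Finset.sum_insert (f := fun j => (x j : ℤ)) h0
    have hsub : ∑ j ∈ insert 0 S, (x j : ℤ) ≤ ∑ j, (x j : ℤ) :=
      Finset.sum_le_sum_of_subset_of_nonneg (Finset.subset_univ _)
        (fun i _ _ => Int.natCast_nonneg _)
    have h2 : (0 : ℤ) ≤ ∑ j ∈ S, (y j : ℤ) :=
      Finset.sum_nonneg (fun i _ => Int.natCast_nonneg _)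
    rw [hins, hxZ] at hsub
    linarith

end Helpers

theorem statement_8 (n l : ℕ) (hn : 1 ≤ n) (hl : 1 ≤ l)
    (k : ℕ) (hk1 : 1 ≤ k) (hkl : k ≤ l) :
    {b : ACrystal n | ∃ j : Fin (n + 1), j ≠ 0 ∧ ∃ b₀ : ACrystal n,
        inComp n (l - 1) ((k : ℤ) - 1) b₀ ∧ Theta n j b₀ = b}
      = {b : ACrystal n | inComp n l k b ∧ wtA n ((k : ℤ) - 1) (wtOf n b)} := by
  ext ⟨x, y⟩
  simp only [Set.mem_setOf_eq]
  constructor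
  · rintro ⟨j, hj, ⟨x₀, y₀⟩, ⟨⟨⟨hx, hy⟩, hmin⟩, hTh⟩⟩
    have h0j : (0 : Fin (n + 1)) ≠ j := fun h => hj h.symm
    have hxeq : x = fun i => x₀ i + (if i = j then 1 else 0) :=
      (congrArg Prod.fst hTh).symm
    have hyeq : y = fun i => y₀ i + (if i = j then 1 else 0) :=
      (congrArg Prod.snd hTh).symm
    have hx0 : x 0 = x₀ 0 := by rw [hxeq]; simp [h0j]
    have hy0 : y 0 = y₀ 0 := by rw [hyeq]; simp [h0j]
    have hite : ∑ i : Fin (n + 1), (if i = j then 1 else 0) = 1 := by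
      rw [Finset.sum_ite_eq' Finset.univ j (fun _ => 1)]
      simp
    have hsum1 : ∑ i, x i = l := by
      rw [hxeq]
      rw [Finset.sum_add_distrib, hx, hite]
      omega
    have hsum2 : ∑ i, y i = l := by
      rw [hyeq]
      rw [Finset.sum_add_distrib, hy, hite]
      omega
    simp only [inComp, inB] at hmin ⊢
    refine ⟨⟨⟨hsum1, hsum2⟩, ?_⟩, ?_⟩
    · rw [hx0, hy0]; omega
    · have hwt : wtOf n (x, y) = fun i => (x₀ i : ℤ) - (y₀ i : ℤ) := by
        funext i
        simp only [wtOf, hxeq, hyeq]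
        push_cast
        ring
      rw [hwt]
      apply wtA_of_all_subsets (by omega)
      intro S
      exact sum_diff_le x₀ y₀ (l - 1) ((k : ℤ) - 1) hx hy (by omega) (by omega) S
  · rintro ⟨⟨⟨hx, hy⟩, hmin⟩, hwt⟩
    simp only at hx hy hmin
    have hxZ : ∑ j, (x j : ℤ) = l := by rw [← Nat.cast_sum, hx]
    have hyZ : ∑ j, (y j : ℤ) = l := by rw [← Nat.cast_sum, hy]
    have hwt' : ∀ S : Finset (Fin (n + 1)), S.Nonempty → S ≠ Finset.univ →
        ∑ j ∈ S, ((x j : ℤ) - (y j : ℤ)) ≤ (k : ℤ) - 1 := by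
      intro S h1 h2
      exact wtA_sum_subset hwt S h1 h2
    have hkey : ∃ j : Fin (n + 1), j ≠ 0 ∧ 0 < x j ∧ 0 < y j := by
      by_contra hcon
      push_neg at hcon
      have hx_erase : (x 0 : ℤ) + ∑ j ∈ Finset.univ.erase 0, (x j : ℤ)
          = ∑ j : Fin (n + 1), (x j : ℤ) :=
        Finset.add_sum_erase Finset.univ (fun j => (x j : ℤ)) (Finset.mem_univ 0)
      have hy_erase : (y 0 : ℤ) + ∑ j ∈ Finset.univ.erase 0, (y j : ℤ)
          = ∑ j : Fin (n + 1), (y j : ℤ) :=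
        Finset.add_sum_erase Finset.univ (fun j => (y j : ℤ)) (Finset.mem_univ 0)
      rcases le_total (x 0) (y 0) with hxy | hxy
      · set S := Finset.univ.filter (fun j : Fin (n + 1) => j ≠ 0 ∧ 0 < x j) with hS
        have hy0 : ∀ j ∈ S, (y j : ℤ) = 0 := by
          intro j hjS
          simp only [hS, Finset.mem_filter, Finset.mem_univ, true_and] at hjS
          have := hcon j hjS.1 hjS.2
          omega
        have h1 : ∑ j ∈ S, ((x j : ℤ) - y j) = ∑ j ∈ S, (x j : ℤ) := by
          apply Finset.sum_congr rfl
          intro j hjS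
          rw [hy0 j hjS]; ring
        have hsub : S ⊆ Finset.univ.erase 0 := by
          intro j hjS
          simp only [hS, Finset.mem_filter, Finset.mem_univ, true_and] at hjS
          exact Finset.mem_erase.mpr ⟨hjS.1, Finset.mem_univ _⟩
        have h2 : ∑ j ∈ S, (x j : ℤ) = ∑ j ∈ Finset.univ.erase 0, (x j : ℤ) := by
          apply Finset.sum_subset hsub
          intro j hj hjS
          have hj0 : j ≠ 0 := (Finset.mem_erase.mp hj).1
          have hxj : ¬ 0 < x j := fun hc =>
            hjS (by simp only [hS, Finset.mem_filter, Finset.mem_univ, true_and]; exact ⟨hj0, hc⟩)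
          omega
        have hSsum : ∑ j ∈ S, ((x j : ℤ) - y j) = k := by
          rw [h1, h2]
          omega
        have hne : S.Nonempty := by
          rcases S.eq_empty_or_nonempty with h | h
          · rw [h] at hSsum; simp at hSsum; omega
          · exact h
        have hnu : S ≠ Finset.univ := by
          intro hSu
          have h0S : (0 : Fin (n + 1)) ∈ S := hSu ▸ Finset.mem_univ 0
          simp only [hS, Finset.mem_filter, Finset.mem_univ, true_and] at h0S
          exact h0S.1 rfl
        have := hwt' S hne hnu
        omega
      · set S := Finset.univ.filter (fun j : Fin (n + 1) => j = 0 ∨ y j = 0) with hS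
        have h0S : (0 : Fin (n + 1)) ∈ S := by
          simp [hS]
        have hSe : ∀ j ∈ S.erase 0, (y j : ℤ) = 0 := by
          intro j hjS
          obtain ⟨hj0, hjS⟩ := Finset.mem_erase.mp hjS
          simp only [hS, Finset.mem_filter, Finset.mem_univ, true_and] at hjS
          rcases hjS with h | h
          · exact absurd h hj0
          · simp [h]
        have h1 : ∑ j ∈ S.erase 0, ((x j : ℤ) - y j) = ∑ j ∈ S.erase 0, (x j : ℤ) := by
          apply Finset.sum_congr rfl
          intro j hjS
          rw [hSe j hjS]; ring
        have hsub : S.erase 0 ⊆ Finset.univ.erase 0 :=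
          fun j hj => Finset.mem_erase.mpr ⟨(Finset.mem_erase.mp hj).1, Finset.mem_univ _⟩
        have h2 : ∑ j ∈ S.erase 0, (x j : ℤ) = ∑ j ∈ Finset.univ.erase 0, (x j : ℤ) := by
          apply Finset.sum_subset hsub
          intro j hj hjS
          have hj0 : j ≠ 0 := (Finset.mem_erase.mp hj).1
          have hyj : y j ≠ 0 := by
            intro hc
            exact hjS (Finset.mem_erase.mpr ⟨hj0,
              by simp only [hS, Finset.mem_filter, Finset.mem_univ, true_and]; exact Or.inr hc⟩)
          have hxj := hcon j hj0
          omega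
        have hSsum : ∑ j ∈ S, ((x j : ℤ) - y j) = k := by
          have he : ((x 0 : ℤ) - y 0) + ∑ j ∈ S.erase 0, ((x j : ℤ) - y j)
              = ∑ j ∈ S, ((x j : ℤ) - y j) :=
            Finset.add_sum_erase S (fun j => (x j : ℤ) - y j) h0S
          rw [← he, h1, h2]
          omega
        have hnu : S ≠ Finset.univ := by
          intro hSu
          have hall : ∑ j ∈ Finset.univ.erase 0, (y j : ℤ) = 0 := by
            apply Finset.sum_eq_zero
            intro j hj
            have hj0 : j ≠ 0 := (Finset.mem_erase.mp hj).1
            have hjS : j ∈ S := hSu ▸ Finset.mem_univ j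
            simp only [hS, Finset.mem_filter, Finset.mem_univ, true_and] at hjS
            rcases hjS with h | h
            · exact absurd h hj0
            · simp [h]
          omega
        have := hwt' S ⟨0, h0S⟩ hnu
        omega
    obtain ⟨j, hj, hxj, hyj⟩ := hkey
    have h0j : (0 : Fin (n + 1)) ≠ j := fun h => hj h.symm
    refine ⟨j, hj, (fun i => x i - if i = j then 1 else 0,
        fun i => y i - if i = j then 1 else 0), ⟨⟨?_, ?_⟩, ?_⟩, ?_⟩
    · show ∑ i : Fin (n + 1), (x i - if i = j then 1 else 0) = l - 1
      have h5 : (x j - if j = j then 1 else 0)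
            + ∑ i ∈ Finset.univ.erase j, (x i - if i = j then 1 else 0)
          = ∑ i : Fin (n + 1), (x i - if i = j then 1 else 0) :=
        Finset.add_sum_erase Finset.univ
          (fun i => x i - if i = j then 1 else 0) (Finset.mem_univ j)
      have h6 : x j + ∑ i ∈ Finset.univ.erase j, x i = ∑ i : Fin (n + 1), x i :=
        Finset.add_sum_erase Finset.univ x (Finset.mem_univ j)
      have h7 : ∑ i ∈ Finset.univ.erase j, (x i - if i = j then 1 else 0)
          = ∑ i ∈ Finset.univ.erase j, x i := by
        apply Finset.sum_congr rfl
        intro i hi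
        rw [if_neg (Finset.mem_erase.mp hi).1]
        omega
      rw [if_pos rfl] at h5
      rw [h7] at h5
      rw [hx] at h6
      omega
    · show ∑ i : Fin (n + 1), (y i - if i = j then 1 else 0) = l - 1
      have h5 : (y j - if j = j then 1 else 0)
            + ∑ i ∈ Finset.univ.erase j, (y i - if i = j then 1 else 0)
          = ∑ i : Fin (n + 1), (y i - if i = j then 1 else 0) :=
        Finset.add_sum_erase Finset.univ
          (fun i => y i - if i = j then 1 else 0) (Finset.mem_univ j)
      have h6 : y j + ∑ i ∈ Finset.univ.erase j, y i = ∑ i : Fin (n + 1), y i :=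
        Finset.add_sum_erase Finset.univ y (Finset.mem_univ j)
      have h7 : ∑ i ∈ Finset.univ.erase j, (y i - if i = j then 1 else 0)
          = ∑ i ∈ Finset.univ.erase j, y i := by
        apply Finset.sum_congr rfl
        intro i hi
        rw [if_neg (Finset.mem_erase.mp hi).1]
        omega
      rw [if_pos rfl] at h5
      rw [h7] at h5
      rw [hy] at h6
      omega
    · show min ((↑(x 0 - if (0 : Fin (n + 1)) = j then 1 else 0) : ℤ))
          ((↑(y 0 - if (0 : Fin (n + 1)) = j then 1 else 0) : ℤ)) = (↑(l - 1) : ℤ) - (↑k - 1)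
      rw [if_neg h0j]
      omega
    · simp only [Theta, Prod.mk.injEq]
      constructor
      · funext i
        show x i - (if i = j then 1 else 0) + (if i = j then 1 else 0) = x i
        by_cases hi : i = j
        · rw [if_pos hi]
          subst hi
          omega
        · rw [if_neg hi]
          omega
      · funext i
        show y i - (if i = j then 1 else 0) + (if i = j then 1 else 0) = y i
        by_cases hi : i = j
        · rw [if_pos hi]
          subst hi
          omega
        · rw [if_neg hi]
          omega
end

section
/- With the combinatorial model of the Kirillov–Reshetikhin crystal B_s = B^{1,2s} of type C_n^{(1)}, the operators f̃_i, and the maps Φ_j as in the context, for every j ∈ {1,…,n}: (i) for every 0 ≤ k ≤ l−1, Φ_j maps B(kθ) ⊂ B_{l−1} into B((k+1)θ) ⊂ B_l; (ii) for every i ∈ {1,…,n} and every b ∈ B_{l−1} with f̃_i b ≠ 0, Φ_j(f̃_i b) = f̃_i(Φ_j b); (iii) Φ_j(f̃_0 b) = f̃_0(Φ_j b) for all b ∈ B_{l−1} (with the convention Φ_j(0) = 0; in particular f̃_0 b = 0 implies f̃_0(Φ_j b) = 0). -/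
/-- Model of the KR crystal `B^{1,2s}` of type `C_n^{(1)}`: a tuple
`(x₁, …, x_n, x̄_n, …, x̄₁)`, encoded as the pair of `x = b.1` and `x̄ = b.2`. -/
abbrev CCrystal (n : ℕ) := (Fin n → ℕ) × (Fin n → ℕ)

/-- `∑_{j=1}^{n} (x_j + x̄_j)`. -/
def csum (n : ℕ) (b : CCrystal n) : ℕ := ∑ j, (b.1 j + b.2 j)

/-- Membership in `B_s = B^{1,2s}`: the coordinate sum is even and at most `2s`. -/
def inBC (n s : ℕ) (b : CCrystal n) : Prop := Even (csum n b) ∧ csum n b ≤ 2 * s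

/-- The weight `wt b = (x₁ − x̄₁, …, x_n − x̄_n)`. -/
def wtCof (n : ℕ) (b : CCrystal n) : Fin n → ℤ := fun j => (b.1 j : ℤ) - (b.2 j : ℤ)

/-- `f̃_0` on `B_s`: `x₁ ↦ x₁ + 2` if `x₁ ≥ x̄₁`; `(x₁, x̄₁) ↦ (x₁ + 1, x̄₁ − 1)` if
`x₁ = x̄₁ − 1`; `x̄₁ ↦ x̄₁ − 2` if `x₁ ≤ x̄₁ − 2`; the result is `0` (`none`) if the
resulting tuple does not lie in `B_s`. -/
def fC0 (n : ℕ) (hn : 0 < n) (s : ℕ) (b : CCrystal n) : Option (CCrystal n) :=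
  let i0 : Fin n := ⟨0, hn⟩
  let b' : CCrystal n :=
    if b.2 i0 ≤ b.1 i0 then (Function.update b.1 i0 (b.1 i0 + 2), b.2)
    else if b.1 i0 + 1 = b.2 i0 then
      (Function.update b.1 i0 (b.1 i0 + 1), Function.update b.2 i0 (b.2 i0 - 1))
    else (b.1, Function.update b.2 i0 (b.2 i0 - 2))
  if csum n b' ≤ 2 * s then some b' else none

/-- `f̃_i` for `1 ≤ i ≤ n−1` (here `i = i₀ + 1`): `(x_i, x_{i+1}) ↦ (x_i − 1, x_{i+1} + 1)`
if `x_{i+1} ≥ x̄_{i+1}`, and `(x̄_{i+1}, x̄_i) ↦ (x̄_{i+1} − 1, x̄_i + 1)` otherwise;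
the result is `0` (`none`) if a coordinate would become negative. -/
def fCi (n i₀ : ℕ) (h : i₀ + 1 < n) (b : CCrystal n) : Option (CCrystal n) :=
  let a : Fin n := ⟨i₀, by omega⟩
  let a' : Fin n := ⟨i₀ + 1, h⟩
  if b.2 a' ≤ b.1 a' then
    if 0 < b.1 a then
      some (Function.update (Function.update b.1 a (b.1 a - 1)) a' (b.1 a' + 1), b.2)
    else none
  else
    if 0 < b.2 a' then
      some (b.1, Function.update (Function.update b.2 a' (b.2 a' - 1)) a (b.2 a + 1))
    else none

/-- `f̃_n`: `(x_n, x̄_n) ↦ (x_n − 1, x̄_n + 1)`; `0` (`none`) if `x_n = 0`. -/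
def fCn (n : ℕ) (hn : 0 < n) (b : CCrystal n) : Option (CCrystal n) :=
  let a : Fin n := ⟨n - 1, by omega⟩
  if 0 < b.1 a then
    some (Function.update b.1 a (b.1 a - 1), Function.update b.2 a (b.2 a + 1))
  else none

/-- `Φ_j : B_{l−1} → B_l` adds `1` to both `x_j` and `x̄_j` (here the index `j + 1`
for `j : Fin n`). -/
def Phi (n : ℕ) (j : Fin n) (b : CCrystal n) : CCrystal n :=
  (Function.update b.1 j (b.1 j + 1), Function.update b.2 j (b.2 j + 1))


set_option linter.unnecessarySeqFocus false
set_option linter.unreachableTactic false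
set_option linter.unusedTactic false
set_option maxHeartbeats 1000000

lemma csum_upd (n : ℕ) (b : CCrystal n) (a : Fin n) (v w : ℕ) :
    csum n (Function.update b.1 a v, Function.update b.2 a w) + (b.1 a + b.2 a)
      = csum n b + (v + w) := by
  unfold csum
  simp only [Finset.sum_add_distrib]
  rw [Finset.sum_update_of_mem (Finset.mem_univ a),
      Finset.sum_update_of_mem (Finset.mem_univ a),
      ← Finset.add_sum_erase _ b.1 (Finset.mem_univ a),
      ← Finset.add_sum_erase _ b.2 (Finset.mem_univ a)]
  simp [Finset.sdiff_singleton_eq_erase]; ring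

lemma csum_Phi (n : ℕ) (j : Fin n) (b : CCrystal n) :
    csum n (Phi n j b) = csum n b + 2 := by
  have := csum_upd n b j (b.1 j + 1) (b.2 j + 1)
  unfold Phi; omega

lemma Phi_fst (n : ℕ) (j : Fin n) (b : CCrystal n) (i : Fin n) :
    (Phi n j b).1 i = b.1 i + if i = j then 1 else 0 := by
  simp [Phi, Function.update_apply]; split_ifs <;> simp_all
lemma Phi_snd (n : ℕ) (j : Fin n) (b : CCrystal n) (i : Fin n) :
    (Phi n j b).2 i = b.2 i + if i = j then 1 else 0 := by
  simp [Phi, Function.update_apply]; split_ifs <;> simp_all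

lemma fCi_comm (n l : ℕ) (j : Fin n)
    (i₀ : ℕ) (h : i₀ + 1 < n) (b : CCrystal n)
    (hne : fCi n i₀ h b ≠ none) :
    Option.map (Phi n j) (fCi n i₀ h b) = fCi n i₀ h (Phi n j b) := by
  simp only [fCi] at hne ⊢
  split_ifs at hne ⊢ with c1 c2 c3 c4 c5 c6 c7 c8 c9 c10 c11 c12
  all_goals first
    | exact absurd rfl hne
    | (exfalso; simp only [Phi_fst, Phi_snd] at *; split_ifs at * <;> omega)
    | (simp only [Option.map_some, Option.some.injEq]
       refine Prod.ext (funext fun i => ?_) (funext fun i => ?_) <;>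
         simp only [Phi, Function.update_apply] <;>
         split_ifs <;> subst_vars <;>
         first | omega | (simp only [Fin.mk.injEq] at *; omega))

lemma fCn_comm (n l : ℕ) (j : Fin n) (hp : 0 < n)
    (b : CCrystal n) (hne : fCn n hp b ≠ none) :
    Option.map (Phi n j) (fCn n hp b) = fCn n hp (Phi n j b) := by
  simp only [fCn] at hne ⊢
  split_ifs at hne ⊢ with c1 c2 c3
  all_goals first
    | exact absurd rfl hne
    | (exfalso; simp only [Phi_fst, Phi_snd] at *; split_ifs at * <;> omega)
    | (simp only [Option.map_some, Option.some.injEq]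
       refine Prod.ext (funext fun i => ?_) (funext fun i => ?_) <;>
         simp only [Phi, Function.update_apply] <;>
         split_ifs <;> subst_vars <;>
         first | omega | (simp only [Fin.mk.injEq] at *; omega))

lemma fC0_comm (n : ℕ) (hn : 0 < n) (l : ℕ) (hl : 1 ≤ l) (j : Fin n)
    (b : CCrystal n) (hble : csum n b ≤ 2 * (l - 1)) :
    Option.map (Phi n j) (fC0 n hn (l - 1) b) = fC0 n hn l (Phi n j b) := by
  simp only [fC0]
  by_cases h1 : b.2 ⟨0, hn⟩ ≤ b.1 ⟨0, hn⟩
  · have h1' : (Phi n j b).2 ⟨0, hn⟩ ≤ (Phi n j b).1 ⟨0, hn⟩ := by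
      rw [Phi_fst, Phi_snd]; split_ifs <;> omega
    rw [if_pos h1, if_pos h1']
    have hEq : (Function.update (Phi n j b).1 ⟨0, hn⟩
          ((Phi n j b).1 ⟨0, hn⟩ + 2), (Phi n j b).2)
        = Phi n j (Function.update b.1 ⟨0, hn⟩ (b.1 ⟨0, hn⟩ + 2), b.2) := by
      refine Prod.ext (funext fun i => ?_) (funext fun i => ?_) <;>
        simp only [Phi, Function.update_apply] <;>
        split_ifs <;> subst_vars <;> first | omega | simp_all
    rw [hEq, csum_Phi]
    by_cases hcs : csum n (Function.update b.1 ⟨0, hn⟩ (b.1 ⟨0, hn⟩ + 2), b.2)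
        ≤ 2 * (l - 1)
    · rw [if_pos hcs, if_pos (by omega), Option.map_some]
    · rw [if_neg hcs, if_neg (by omega), Option.map_none]
  · have h1' : ¬ (Phi n j b).2 ⟨0, hn⟩ ≤ (Phi n j b).1 ⟨0, hn⟩ := by
      rw [Phi_fst, Phi_snd]; split_ifs <;> omega
    rw [if_neg h1, if_neg h1']
    by_cases h2 : b.1 ⟨0, hn⟩ + 1 = b.2 ⟨0, hn⟩
    · have h2' : (Phi n j b).1 ⟨0, hn⟩ + 1 = (Phi n j b).2 ⟨0, hn⟩ := by
        rw [Phi_fst, Phi_snd]; split_ifs <;> omega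
      rw [if_pos h2, if_pos h2']
      have hEq : (Function.update (Phi n j b).1 ⟨0, hn⟩
            ((Phi n j b).1 ⟨0, hn⟩ + 1),
            Function.update (Phi n j b).2 ⟨0, hn⟩
            ((Phi n j b).2 ⟨0, hn⟩ - 1))
          = Phi n j (Function.update b.1 ⟨0, hn⟩ (b.1 ⟨0, hn⟩ + 1),
              Function.update b.2 ⟨0, hn⟩ (b.2 ⟨0, hn⟩ - 1)) := by
        refine Prod.ext (funext fun i => ?_) (funext fun i => ?_) <;>
          simp only [Phi, Function.update_apply] <;>
          split_ifs <;> subst_vars <;> first | omega | simp_all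
      rw [hEq, csum_Phi]
      have hcs : csum n (Function.update b.1 ⟨0, hn⟩ (b.1 ⟨0, hn⟩ + 1),
          Function.update b.2 ⟨0, hn⟩ (b.2 ⟨0, hn⟩ - 1)) = csum n b := by
        have := csum_upd n b ⟨0, hn⟩ (b.1 ⟨0, hn⟩ + 1) (b.2 ⟨0, hn⟩ - 1)
        omega
      rw [hcs, if_pos (by omega), if_pos (by omega), Option.map_some]
    · have h2' : ¬ (Phi n j b).1 ⟨0, hn⟩ + 1 = (Phi n j b).2 ⟨0, hn⟩ := by
        rw [Phi_fst, Phi_snd]; split_ifs <;> omega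
      rw [if_neg h2, if_neg h2']
      have hEq : ((Phi n j b).1, Function.update (Phi n j b).2 ⟨0, hn⟩
            ((Phi n j b).2 ⟨0, hn⟩ - 2))
          = Phi n j (b.1, Function.update b.2 ⟨0, hn⟩ (b.2 ⟨0, hn⟩ - 2)) := by
        refine Prod.ext (funext fun i => ?_) (funext fun i => ?_) <;>
          simp only [Phi, Function.update_apply] <;>
          split_ifs <;> subst_vars <;> first | omega | simp_all
      rw [hEq, csum_Phi]
      have hcs : csum n (b.1, Function.update b.2 ⟨0, hn⟩ (b.2 ⟨0, hn⟩ - 2))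
          + 2 = csum n b := by
        have h3 := csum_upd n b ⟨0, hn⟩ (b.1 ⟨0, hn⟩) (b.2 ⟨0, hn⟩ - 2)
        rw [Function.update_eq_self] at h3
        omega
      rw [if_pos (by omega), if_pos (by omega), Option.map_some]

theorem statement_12 (n l : ℕ) (hn : 2 ≤ n) (hl : 1 ≤ l) (j : Fin n) :
    -- (i) `Φ_j` maps `B(kθ) ⊂ B_{l−1}` into `B((k+1)θ) ⊂ B_l` for `0 ≤ k ≤ l−1`
    (∀ k : ℕ, k ≤ l - 1 → ∀ b : CCrystal n, csum n b = 2 * k →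
      csum n (Phi n j b) = 2 * (k + 1)) ∧
    -- (ii) `Φ_j(f̃_i b) = f̃_i(Φ_j b)` whenever `i ∈ {1, …, n}` and `f̃_i b ≠ 0`
    (∀ i₀ : ℕ, ∀ h : i₀ + 1 < n, ∀ b : CCrystal n, inBC n (l - 1) b →
      fCi n i₀ h b ≠ none →
      Option.map (Phi n j) (fCi n i₀ h b) = fCi n i₀ h (Phi n j b)) ∧
    (∀ b : CCrystal n, inBC n (l - 1) b → fCn n (by omega) b ≠ none →
      Option.map (Phi n j) (fCn n (by omega) b) = fCn n (by omega) (Phi n j b)) ∧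
    -- (iii) `Φ_j` commutes with `f̃_0` (with `Φ_j(0) = 0`)
    (∀ b : CCrystal n, inBC n (l - 1) b →
      Option.map (Phi n j) (fC0 n (by omega) (l - 1) b)
        = fC0 n (by omega) l (Phi n j b)) := by
  refine ⟨?_, ?_, ?_, ?_⟩
  · intro k hk b hb
    rw [csum_Phi, hb]; ring
  · intro i₀ h b hb hne
    exact fCi_comm n l j i₀ h b hne
  · intro b hb hne
    exact fCn_comm n l j _ b hne
  · intro b hb
    exact fC0_comm n _ l hl j b hb.2
end
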